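/- Let g : [t₁, t₀] → ℝ be differentiable with g(t₁) = −λ < 0, and suppose ġ(t) + V₁^{-1} m(t) g(t)² ≤ 0 on [t₁, t₀], where m(t) ≥ 0 is integrable and V₁ > 0. Then g(t) < 0 for all t ∈ [t₁, t₀] and ∫_{t₁}^{t₀} m(t) dt ≤ V₁/λ. -/
import Mathlib


open Real MeasureTheory

/-- ODE comparison lemma: if `g(t₁) = -λ < 0` and `g' + V₁⁻¹ m g² ≤ 0`, then `g` stays
negative and `∫ m ≤ V₁/λ`. -/
theorem stmt_8 (t₁ t₀ lam V₁ : ℝ) (g m : ℝ → ℝ) (ht : t₁ ≤ t₀) (hlam : 0 < lam)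
    (hV : 0 < V₁)
    (hg : ∀ t ∈ Set.Icc t₁ t₀, DifferentiableAt ℝ g t) (hg1 : g t₁ = -lam)
    (hmnn : ∀ t ∈ Set.Icc t₁ t₀, 0 ≤ m t)
    (hmint : IntervalIntegrable m volume t₁ t₀)
    (hineq : ∀ t ∈ Set.Icc t₁ t₀, deriv g t + V₁⁻¹ * m t * (g t) ^ 2 ≤ 0) :
    (∀ t ∈ Set.Icc t₁ t₀, g t < 0) ∧ (∫ t in t₁..t₀, m t) ≤ V₁ / lam := by
  have hgcont : ContinuousOn g (Set.Icc t₁ t₀) := fun t htm =>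
    (hg t htm).continuousAt.continuousWithinAt
  have hderivnp : ∀ t ∈ interior (Set.Icc t₁ t₀), deriv g t ≤ 0 := by
    intro t htI
    have htm : t ∈ Set.Icc t₁ t₀ := interior_subset htI
    have h1 := hineq t htm
    nlinarith [mul_nonneg (mul_nonneg (inv_pos.2 hV).le (hmnn t htm)) (sq_nonneg (g t))]
  have hanti : AntitoneOn g (Set.Icc t₁ t₀) :=
    antitoneOn_of_deriv_nonpos (convex_Icc _ _) hgcont
      (fun t htI => (hg t (interior_subset htI)).differentiableWithinAt) hderivnp
  have hle : ∀ t ∈ Set.Icc t₁ t₀, g t ≤ -lam := by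
    intro t htm
    have := hanti (Set.left_mem_Icc.2 ht) htm htm.1
    rwa [hg1] at this
  have hneg : ∀ t ∈ Set.Icc t₁ t₀, g t < 0 := fun t htm =>
    lt_of_le_of_lt (hle t htm) (by linarith)
  refine ⟨hneg, ?_⟩
  -- second part
  have hne : ∀ t ∈ Set.Icc t₁ t₀, g t ≠ 0 := fun t htm => (hneg t htm).ne
  set φ : ℝ → ℝ := fun t => -(g t)⁻¹ with hφ
  have hφcont : ContinuousOn φ (Set.Icc t₁ t₀) := (hgcont.inv₀ hne).neg
  have hφderiv : ∀ x ∈ Set.Ioo t₁ t₀,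
      HasDerivWithinAt φ (deriv g x / (g x) ^ 2) (Set.Ioi x) x := by
    intro x hx
    have hxm : x ∈ Set.Icc t₁ t₀ := Set.Ioo_subset_Icc_self hx
    have h1 : HasDerivAt g (deriv g x) x := (hg x hxm).hasDerivAt
    have h2 : HasDerivAt (fun y => -(g y)⁻¹) (-(-deriv g x / (g x) ^ 2)) x :=
      (h1.inv (hne x hxm)).neg
    have h3 : -(-deriv g x / (g x) ^ 2) = deriv g x / (g x) ^ 2 := by ring
    rw [h3] at h2
    exact h2.hasDerivWithinAt
  have hbound : ∀ x ∈ Set.Ioo t₁ t₀, deriv g x / (g x) ^ 2 ≤ -(V₁⁻¹ * m x) := by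
    intro x hx
    have hxm : x ∈ Set.Icc t₁ t₀ := Set.Ioo_subset_Icc_self hx
    have hsq : (0:ℝ) < (g x) ^ 2 :=
      lt_of_le_of_ne (sq_nonneg _) (Ne.symm (pow_ne_zero 2 (hne x hxm)))
    rw [div_le_iff₀ hsq]
    nlinarith [hineq x hxm]
  have φint : IntegrableOn (fun x => -(V₁⁻¹ * m x)) (Set.Icc t₁ t₀) volume := by
    have h1 : IntegrableOn m (Set.Icc t₁ t₀) volume := by
      rw [integrableOn_Icc_iff_integrableOn_Ioc]
      simpa [Set.uIoc_of_le ht] using hmint.1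
    exact ((h1.const_mul V₁⁻¹).neg)
  have key := intervalIntegral.sub_le_integral_of_hasDeriv_right_of_le ht hφcont hφderiv φint hbound
  have hint : (∫ y in t₁..t₀, -(V₁⁻¹ * m y)) = -(V₁⁻¹ * ∫ y in t₁..t₀, m y) := by
    rw [intervalIntegral.integral_neg, intervalIntegral.integral_const_mul]
  rw [hint] at key
  have hφ1 : φ t₁ = lam⁻¹ := by
    show -(g t₁)⁻¹ = lam⁻¹
    rw [hg1, inv_neg, neg_neg]
  have hφ0 : 0 < φ t₀ := by
    have h := hneg t₀ (Set.right_mem_Icc.2 ht)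
    show (0:ℝ) < -(g t₀)⁻¹
    exact neg_pos.2 (inv_lt_zero.2 h)
  rw [hφ1] at key
  -- key : φ t₀ - lam⁻¹ ≤ -(V₁⁻¹ * ∫ m)
  clear_value φ
  have h2 : V₁⁻¹ * (∫ y in t₁..t₀, m y) ≤ lam⁻¹ := by linarith
  have h3 : (∫ y in t₁..t₀, m y) ≤ V₁ * lam⁻¹ := by
    have := mul_le_mul_of_nonneg_left h2 hV.le
    rwa [← mul_assoc, mul_inv_cancel₀ hV.ne', one_mul] at this
  rwa [div_eq_mul_inv]
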